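/- For all natural numbers p and r there exists a natural number N with the following property: for every q ≥ N and every function F assigning to each unordered pair {u, v} of distinct elements of Fin q a Boolean function f_{uv} on unordered pairs of distinct elements of Fin p, there exist a subset S of Fin q with |S| = r and a single Boolean function f on unordered pairs of distinct elements of Fin p such that F({u,v}) = f for all pairs {u,v} of distinct elements of S, and moreover either (i) the simple graph on Fin p whose edges are the pairs {i,j} with f({i,j}) = false contains a triangle (a clique of size 3), or (ii) the number of unordered pairs {i,j} of distinct elements of Fin p with f({i,j}) = true is at least Z(p) = ⌊p/2⌋·⌊(p−1)/2⌋. -/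

import Mathlib

/-!
Ramsey: choose greedily a sequence `g 0, g 1, …` in which the colour of a pair `{g i, g j}` with
`i < j` depends only on `i` (after choosing a term, keep only the candidates in the largest colour
class of pairs with it), then apply the pigeonhole principle to these colours. Turán: a triangle-free graph on `p` vertices has
at most `⌊p²/4⌋` edges, and `⌊p/2⌋⌊(p-1)/2⌋ + ⌊p²/4⌋ = p(p-1)/2`, so if the pairs coloured
`false` form no triangle, at least `Z(p)` pairs are coloured `true`.
-/

open Finset

theorem exists_injective_color_eq_of_lt {α κ : Type*} [DecidableEq α] [Fintype κ]
    (c : α → α → κ) (m : ℕ) (A : Finset α) (hA : (Fintype.card κ + 1) ^ m ≤ #A) :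
    ∃ (g : Fin m → α) (h : Fin m → κ), Function.Injective g ∧ (∀ i, g i ∈ A) ∧
      ∀ i j, i < j → c (g i) (g j) = h i := by
  classical
  induction m generalizing A with
  | zero => exact ⟨Fin.elim0, Fin.elim0, fun i => i.elim0, fun i => i.elim0, fun i => i.elim0⟩
  | succ m ih =>
    obtain ⟨x, hx⟩ : A.Nonempty := card_pos.mp (lt_of_lt_of_le (by positivity) hA)
    have : Nonempty κ := ⟨c x x⟩
    obtain ⟨k, -, hk⟩ := exists_le_card_fiber_of_mul_le_card_of_maps_to
      (s := A.erase x) (f := c x) (fun _ _ => mem_univ _) univ_nonempty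
      (n := (Fintype.card κ + 1) ^ m) (by
        rw [card_erase_of_mem hx, card_univ]
        rw [pow_succ, mul_add_one, mul_comm] at hA
        have : 0 < (Fintype.card κ + 1) ^ m := by positivity
        omega)
    obtain ⟨g, h, hg, hgA, hgc⟩ := ih _ hk
    have hgB (i : Fin m) : g i ≠ x ∧ g i ∈ A ∧ c x (g i) = k := by
      simpa [and_assoc] using hgA i
    refine ⟨Fin.cons x g, Fin.cons k h, Fin.cons_injective_iff.mpr ⟨fun ⟨i, hi⟩ => (hgB i).1 hi, hg⟩,
      Fin.cases hx fun i => (hgB i).2.1, ?_⟩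
    intro i j hij
    obtain ⟨j, rfl⟩ := Fin.exists_succ_eq.mpr (Fin.ne_zero_of_lt hij)
    cases i using Fin.cases with
    | zero => exact (hgB j).2.2
    | succ i => exact hgc i j (Fin.succ_lt_succ_iff.mp hij)

theorem exists_card_eq_forall_color_eq {α κ : Type*} [Fintype α] [DecidableEq α] [Fintype κ]
    (r : ℕ) (hα : (Fintype.card κ + 1) ^ (Fintype.card κ * (r - 1) + 1) ≤ Fintype.card α)
    (c : Sym2 α → κ) :
    ∃ (S : Finset α) (k : κ), #S = r ∧ ∀ u ∈ S, ∀ v ∈ S, u ≠ v → c s(u, v) = k := by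
  classical
  obtain ⟨g, h, hg, -, hgc⟩ := exists_injective_color_eq_of_lt (fun u v => c s(u, v)) _ univ hα
  obtain ⟨k, -, hk⟩ := exists_lt_card_fiber_of_mul_lt_card_of_maps_to (s := univ) (f := h)
    (t := univ) (n := r - 1) (fun _ _ => mem_univ _) (by simp)
  obtain ⟨T, hT, hTr⟩ := exists_subset_card_eq (show r ≤ #{i | h i = k} by omega)
  have hTk {i} (hi : i ∈ T) : h i = k := (mem_filter.mp (hT hi)).2
  refine ⟨T.map ⟨g, hg⟩, k, by rw [card_map, hTr], ?_⟩
  simp only [mem_map, Function.Embedding.coeFn_mk]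
  rintro _ ⟨i, hi, rfl⟩ _ ⟨j, hj, rfl⟩ hij
  rcases lt_or_gt_of_ne (hg.ne_iff.mp hij) with hlt | hlt
  · rw [← hTk hi, ← hgc i j hlt]
  · rw [Sym2.eq_swap, ← hTk hj, ← hgc j i hlt]

theorem Nat.div_two_mul_sub_one_div_two_add_sq_div_four (n : ℕ) :
    n / 2 * ((n - 1) / 2) + n ^ 2 / 4 = n.choose 2 := by
  rw [Nat.choose_two_right]
  obtain ⟨t, rfl | rfl⟩ := Nat.even_or_odd' n
  · rcases t with _ | t
    · rfl
    · have h1 : (2 * (t + 1)) ^ 2 = 4 * (t + 1) ^ 2 := by ring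
      have h2 : 2 * (t + 1) * (2 * (t + 1) - 1) = 2 * ((t + 1) * (2 * t + 1)) := by
        rw [show 2 * (t + 1) - 1 = 2 * t + 1 by omega]; ring
      rw [show 2 * (t + 1) / 2 = t + 1 by omega, show (2 * (t + 1) - 1) / 2 = t by omega, h1, h2,
        Nat.mul_div_cancel_left _ four_pos, Nat.mul_div_cancel_left _ two_pos]
      ring
  · have h1 : (2 * t + 1) ^ 2 = 4 * (t ^ 2 + t) + 1 := by ring
    have h2 : (2 * t + 1) * (2 * t) = 2 * ((2 * t + 1) * t) := by ring
    rw [show (2 * t + 1) / 2 = t by omega, Nat.add_sub_cancel, show 2 * t / 2 = t by omega, h1, h2,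
      Nat.mul_add_div four_pos, Nat.mul_div_cancel_left _ two_pos]
    ring

namespace SimpleGraph

variable {V : Type*} [Fintype V]

theorem CliqueFree.card_edgeFinset_add_le_choose_two {G : SimpleGraph V} [DecidableRel G.Adj]
    (hG : G.CliqueFree 3) :
    #G.edgeFinset + Fintype.card V / 2 * ((Fintype.card V - 1) / 2) ≤
      (Fintype.card V).choose 2 := by
  have hturan : #G.edgeFinset ≤ Fintype.card V ^ 2 / 4 :=
    (hG.card_edgeFinset_le (r := 2)).trans <| by
      rw [Nat.choose_eq_zero_of_lt (Nat.mod_lt _ two_pos)]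
      exact Nat.div_le_div_right (by simp)
  have := Nat.div_two_mul_sub_one_div_two_add_sq_div_four (Fintype.card V)
  omega

section DecidableEq

variable [DecidableEq V]

theorem edgeFinset_fromRel_eq_false (f : Sym2 V → Bool) :
    (fromRel fun i j => f s(i, j) = false).edgeFinset =
      ({e | ¬e.IsDiag ∧ f e = false} : Finset (Sym2 V)) := by
  ext e
  induction e with
  | _ a b => simp [Sym2.eq_swap (a := b)]

theorem card_filter_not_isDiag_true_add_card_edgeFinset_fromRel (f : Sym2 V → Bool) :
    #{e : Sym2 V | ¬e.IsDiag ∧ f e = true} + #(fromRel fun i j => f s(i, j) = false).edgeFinset =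
      (Fintype.card V).choose 2 := by
  have hpairs : #{e : Sym2 V | ¬e.IsDiag} = (Fintype.card V).choose 2 := by
    rw [← Fintype.card_subtype, Sym2.card_subtype_not_diag]
  rw [edgeFinset_fromRel_eq_false, ← hpairs,
    ← card_filter_add_card_filter_not (s := {e : Sym2 V | ¬e.IsDiag}) (p := fun e => f e = true)]
  simp only [filter_filter, Bool.not_eq_true]

end DecidableEq

end SimpleGraph

/-- Combinatorial core of bounding the q-side: for all `p r` there is `N` so
that for every `q ≥ N` and every assignment `F` of a Boolean function on
unordered pairs of distinct elements of `Fin p` to each unordered pair of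
distinct elements of `Fin q`, there is an `r`-set `S ⊆ Fin q` and a single
Boolean function `f` agreeing with `F` on all pairs of distinct elements of
`S`, such that either the graph of pairs with `f = false` contains a triangle,
or at least `Z(p) = ⌊p/2⌋·⌊(p-1)/2⌋` pairs `{i,j}` satisfy `f {i,j} = true`. -/
theorem ramsey_turan_dichotomy (p r : ℕ) :
    ∃ N : ℕ, ∀ q : ℕ, N ≤ q →
      ∀ F : Sym2 (Fin q) → Sym2 (Fin p) → Bool,
        ∃ (S : Finset (Fin q)) (f : Sym2 (Fin p) → Bool),
          S.card = r ∧
          (∀ u v : Fin q, u ∈ S → v ∈ S → u ≠ v →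
            ∀ e : Sym2 (Fin p), ¬ e.IsDiag → F s(u, v) e = f e) ∧
          (¬ (SimpleGraph.fromRel fun i j => f s(i, j) = false).CliqueFree 3 ∨
            p / 2 * ((p - 1) / 2) ≤
              (Finset.univ.filter
                fun e : Sym2 (Fin p) => ¬ e.IsDiag ∧ f e = true).card) := by
  classical
  set k := Fintype.card (Sym2 (Fin p) → Bool)
  refine ⟨(k + 1) ^ (k * (r - 1) + 1), fun q hq F => ?_⟩
  obtain ⟨S, f, hS, hSf⟩ := exists_card_eq_forall_color_eq r (by rwa [Fintype.card_fin]) F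
  refine ⟨S, f, hS, fun u v hu hv huv e _ => by rw [hSf u hu v hv huv], ?_⟩
  refine (em' _).imp_right fun htriangleFree => ?_
  have hmantel := htriangleFree.card_edgeFinset_add_le_choose_two
  have hsplit := SimpleGraph.card_filter_not_isDiag_true_add_card_edgeFinset_fromRel f
  rw [Fintype.card_fin] at hmantel hsplit
  omega
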